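/- Let a, b be elliptic automorphisms of a tree T (each fixes at least one vertex). If the fixed-point sets of a and b are disjoint, then the product ab is hyperbolic, with translation length ℓ(ab) = 2·d(Fix(a), Fix(b)) > 0. -/

import Mathlib

set_option linter.unusedSectionVars false
set_option maxHeartbeats 1000000

open SimpleGraph

section SerreAux
variable {V : Type*} [DecidableEq V] {T : SimpleGraph V}



/-- In a tree, every path realizes the distance between its endpoints. -/
lemma serre_path_len (hT : T.IsTree) {x y : V} {p : T.Walk x y} (hp : p.IsPath) :
    p.length = T.dist x y := by
  obtain ⟨q, hq, hql⟩ := hT.isConnected.exists_path_of_dist x y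
  obtain ⟨r, -, hr⟩ := hT.existsUnique_path x y
  rw [hr p hp, ← hr q hq, hql]

/-- Any vertex on a path in a tree is metrically between the endpoints. -/
lemma serre_btw_of_mem (hT : T.IsTree) {x y v : V} {p : T.Walk x y} (hp : p.IsPath)
    (hv : v ∈ p.support) : T.dist x v + T.dist v y = T.dist x y := by
  have h1 := serre_path_len hT (hp.takeUntil hv)
  have h2 := serre_path_len hT (hp.dropUntil hv)
  have h3 : (p.takeUntil v hv).length + (p.dropUntil v hv).length = p.length := by
    rw [← Walk.length_append, Walk.take_spec]
  have h4 := serre_path_len hT hp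
  omega

lemma serre_isPath_append {x b y : V} {p : T.Walk x b} {q : T.Walk b y}
    (hp : p.IsPath) (hq : q.IsPath) (h : ∀ v, v ∈ p.support → v ∈ q.support → v = b) :
    (p.append q).IsPath := by
  rw [Walk.isPath_def, Walk.support_append]
  refine List.Nodup.append hp.support_nodup (hq.support_nodup.tail) ?_
  intro v hv1 hv2
  have hvq : v ∈ q.support := by
    rw [q.support_eq_cons]; exact List.mem_cons_of_mem _ hv2
  have hvb : v = b := h v hv1 hvq
  subst hvb
  have hnd := q.support_eq_cons ▸ hq.support_nodup
  exact (List.nodup_cons.mp hnd).1 hv2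

/-- If no vertex other than `c` is between both `x, c` and `c, y`, then `c` is between `x, y`. -/
lemma serre_btw_concat (hT : T.IsTree) {x c y : V}
    (h : ∀ v, T.dist x v + T.dist v c = T.dist x c →
      T.dist c v + T.dist v y = T.dist c y → v = c) :
    T.dist x c + T.dist c y = T.dist x y := by
  obtain ⟨p, hp, hpl⟩ := hT.isConnected.exists_path_of_dist x c
  obtain ⟨q, hq, hql⟩ := hT.isConnected.exists_path_of_dist c y
  have hap : (p.append q).IsPath := serre_isPath_append hp hq
    (fun v hvp hvq => h v (serre_btw_of_mem hT hp hvp) (serre_btw_of_mem hT hq hvq))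
  have hlen := serre_path_len hT hap
  rw [Walk.length_append, hpl, hql] at hlen
  exact hlen

/-- Betweenness implies membership in some geodesic path. -/
lemma serre_exists_path_btw (hT : T.IsTree) {x c y : V}
    (h : T.dist x c + T.dist c y = T.dist x y) :
    ∃ p : T.Walk x y, p.IsPath ∧ c ∈ p.support := by
  obtain ⟨p, hp, hpl⟩ := hT.isConnected.exists_path_of_dist x c
  obtain ⟨q, hq, hql⟩ := hT.isConnected.exists_path_of_dist c y
  have hap : (p.append q).IsPath := by
    refine serre_isPath_append hp hq ?_
    intro v hvp hvq
    have h1 := serre_btw_of_mem hT hp hvp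
    have h2 := serre_btw_of_mem hT hq hvq
    have h3 := hT.isConnected.dist_triangle (u := x) (v := v) (w := y)
    have h4 : T.dist c v = 0 := by
      have hcm := T.dist_comm (u := v) (v := c)
      omega
    exact ((hT.isConnected.dist_eq_zero_iff (u := c) (v := v)).mp h4).symm
  exact ⟨p.append q, hap, by rw [Walk.mem_support_append_iff]; left; exact p.end_mem_support⟩

/-- "F": comparability of two points between `x` and `y`. -/
lemma serre_btw_trans (hT : T.IsTree) {x y c c' : V}
    (h1 : T.dist x c + T.dist c y = T.dist x y)
    (h2 : T.dist x c' + T.dist c' y = T.dist x y)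
    (hle : T.dist x c ≤ T.dist x c') :
    T.dist x c + T.dist c c' = T.dist x c' := by
  obtain ⟨p, hp, hcp⟩ := serre_exists_path_btw hT h1
  obtain ⟨p', hp', hcp'⟩ := serre_exists_path_btw hT h2
  obtain ⟨r, -, hr⟩ := hT.existsUnique_path x y
  have hpp : p = p' := by rw [hr p hp, hr p' hp']
  subst hpp
  -- split p at c'
  have hsplit : c ∈ (p.takeUntil c' hcp').support ∨ c ∈ (p.dropUntil c' hcp').support := by
    rw [← Walk.mem_support_append_iff, Walk.take_spec]; exact hcp
  rcases hsplit with hmem | hmem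
  · have := serre_btw_of_mem hT (hp.takeUntil hcp') hmem
    have hlen := serre_path_len hT (hp.takeUntil hcp')
    omega
  · have hb := serre_btw_of_mem hT (hp.dropUntil hcp') hmem
    -- dist c' c + dist c y = dist c' y
    have hc0 : T.dist c' c = 0 := by
      have h5 := hT.isConnected.dist_triangle (u := x) (v := c') (w := c)
      omega
    have hcc : c' = c := (hT.isConnected.dist_eq_zero_iff).mp hc0
    subst hcc
    have : T.dist c' c' = 0 := by simp
    omega

/-- Existence of the neighbour of `x` in the direction of `y ≠ x`. -/
lemma serre_toward_exists (hT : T.IsTree) {x y : V} (hne : x ≠ y) :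
    ∃ u, T.dist x u = 1 ∧ T.dist x u + T.dist u y = T.dist x y := by
  obtain ⟨p, hp, hpl⟩ := hT.isConnected.exists_path_of_dist x y
  have hpos : 0 < T.dist x y := hT.isConnected.pos_dist_of_ne hne
  cases p with
  | nil => exact (hne rfl).elim
  | cons hadj p' =>
    rename_i u
    refine ⟨u, (dist_eq_one_iff_adj).mpr hadj, ?_⟩
    have h1 : T.dist u y ≤ p'.length := dist_le p'
    have h2 : T.dist x y ≤ T.dist x u + T.dist u y := hT.isConnected.dist_triangle
    have h3 : T.dist x u = 1 := (dist_eq_one_iff_adj).mpr hadj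
    simp only [Walk.length_cons] at hpl
    omega

lemma serre_toward_unique (hT : T.IsTree) {x y u u' : V}
    (h1 : T.dist x u = 1) (h2 : T.dist x u + T.dist u y = T.dist x y)
    (h1' : T.dist x u' = 1) (h2' : T.dist x u' + T.dist u' y = T.dist x y) : u = u' := by
  have := serre_btw_trans hT h2 h2' (by omega)
  have h0 : T.dist u u' = 0 := by omega
  exact (hT.isConnected.dist_eq_zero_iff).mp h0

/-- If `u` points from `x` towards `v`, and `v ≠ x` is between `x` and `y`,
then `u` points towards `y`. -/
lemma serre_toward_refine (hT : T.IsTree) {x y u v : V}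
    (h1 : T.dist x u = 1) (h2 : T.dist x u + T.dist u v = T.dist x v)
    (hb : T.dist x v + T.dist v y = T.dist x y) (hvx : v ≠ x) :
    T.dist x u + T.dist u y = T.dist x y := by
  have t1 : T.dist u y ≤ T.dist u v + T.dist v y := hT.isConnected.dist_triangle
  have t2 : T.dist x y ≤ T.dist x u + T.dist u y := hT.isConnected.dist_triangle
  have hpos : 0 < T.dist x v := hT.isConnected.pos_dist_of_ne (Ne.symm hvx)
  omega

/-- If the directions from `x` towards `y` and towards `z` differ, `x` is between `y` and `z`. -/
lemma serre_branch (hT : T.IsTree) {x y z u₁ u₂ : V} (hxy : x ≠ y) (hxz : x ≠ z)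
    (h1 : T.dist x u₁ = 1) (h2 : T.dist x u₁ + T.dist u₁ y = T.dist x y)
    (h1' : T.dist x u₂ = 1) (h2' : T.dist x u₂ + T.dist u₂ z = T.dist x z)
    (hne : u₁ ≠ u₂) :
    T.dist y x + T.dist x z = T.dist y z := by
  refine serre_btw_concat hT ?_
  intro v hv1 hv2
  by_contra hvx
  -- v between y and x, and between x and z
  have hvb : T.dist x v + T.dist v y = T.dist x y := by
    have c1 := T.dist_comm (u := y) (v := v)
    have c2 := T.dist_comm (u := v) (v := x)
    have c3 := T.dist_comm (u := y) (v := x)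
    omega
  obtain ⟨u, hu1, hu2⟩ := serre_toward_exists hT (fun h => hvx h.symm : x ≠ v)
  have huy := serre_toward_refine hT hu1 hu2 hvb hvx
  have huz := serre_toward_refine hT hu1 hu2 hv2 hvx
  have e1 : u = u₁ := serre_toward_unique hT hu1 huy h1 h2
  have e2 : u = u₂ := serre_toward_unique hT hu1 huz h1' h2'
  exact hne (e1 ▸ e2)
/-- Median of three points in a tree. -/
lemma serre_median (hT : T.IsTree) (x y z : V) :
    ∃ c, T.dist x c + T.dist c y = T.dist x y ∧ T.dist x c + T.dist c z = T.dist x z ∧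
      T.dist y c + T.dist c z = T.dist y z := by
  obtain ⟨n, hn⟩ : ∃ n, T.dist x y = n := ⟨_, rfl⟩
  induction n using Nat.strong_induction_on generalizing x y z with
  | _ n IH =>
  by_cases hxy : x = y
  · subst hxy
    exact ⟨x, by simp, by simp, by simp⟩
  by_cases hxz : x = z
  · subst hxz
    refine ⟨x, by simp, by simp, ?_⟩
    rw [T.dist_comm (u := y) (v := x)]; simp
  obtain ⟨u₁, hu1, hb1⟩ := serre_toward_exists hT hxy
  obtain ⟨u₂, hu2, hb2⟩ := serre_toward_exists hT hxz
  by_cases hu : u₁ = u₂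
  · subst hu
    have hlt : T.dist u₁ y < n := by omega
    obtain ⟨c, h1, h2, h3⟩ := IH (T.dist u₁ y) hlt u₁ y z rfl
    have t1 : T.dist x c ≤ T.dist x u₁ + T.dist u₁ c := hT.isConnected.dist_triangle
    have t2 : T.dist x y ≤ T.dist x c + T.dist c y := hT.isConnected.dist_triangle
    have t3 : T.dist x z ≤ T.dist x c + T.dist c z := hT.isConnected.dist_triangle
    exact ⟨c, by omega, by omega, h3⟩
  · refine ⟨x, by simp, by simp, serre_branch hT hxy hxz hu1 hb1 hu2 hb2 hu⟩

/-- The four-point condition (0-hyperbolicity) in a tree. -/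
lemma serre_fourpoint (hT : T.IsTree) (w x y z : V) :
    T.dist x y + T.dist z w ≤ max (T.dist x z + T.dist y w) (T.dist x w + T.dist y z) := by
  obtain ⟨c, hc1, hc2, hc3⟩ := serre_median hT x y w
  obtain ⟨c', hd1, hd2, hd3⟩ := serre_median hT x z w
  obtain ⟨c'', he1, he2, he3⟩ := serre_median hT y z w
  -- commutations needed for omega
  have q1 := T.dist_comm (u := z) (v := w)
  have q2 := T.dist_comm (u := x) (v := c)
  have q3 := T.dist_comm (u := x) (v := c')
  have q4 := T.dist_comm (u := y) (v := c)
  have q5 := T.dist_comm (u := y) (v := c'')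
  have q6 := T.dist_comm (u := z) (v := c')
  have q7 := T.dist_comm (u := z) (v := c'')
  have q8 := T.dist_comm (u := c) (v := w)
  have q9 := T.dist_comm (u := c') (v := w)
  have q10 := T.dist_comm (u := c'') (v := w)
  rcases le_or_gt (T.dist w c') (T.dist w c) with hA | hA
  · refine le_max_of_le_left ?_
    omega
  rcases le_or_gt (T.dist w c'') (T.dist w c) with hB | hB
  · refine le_max_of_le_right ?_
    omega
  -- contradiction case
  exfalso
  have hwcx : T.dist w c + T.dist c x = T.dist w x := by
    have := T.dist_comm (u := x) (v := w); omega
  have hwc'x : T.dist w c' + T.dist c' x = T.dist w x := by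
    have := T.dist_comm (u := x) (v := w); omega
  have hwcy : T.dist w c + T.dist c y = T.dist w y := by
    have := T.dist_comm (u := y) (v := w); omega
  have hwc''y : T.dist w c'' + T.dist c'' y = T.dist w y := by
    have := T.dist_comm (u := y) (v := w); omega
  have hwc'z : T.dist w c' + T.dist c' z = T.dist w z := by omega
  have hwc''z : T.dist w c'' + T.dist c'' z = T.dist w z := by omega
  have t1 := serre_btw_trans hT hwcx hwc'x (by omega)
  have t2 := serre_btw_trans hT hwcy hwc''y (by omega)
  rcases le_or_gt (T.dist w c') (T.dist w c'') with hC | hC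
  · have t3 := serre_btw_trans hT hwc'z hwc''z hC
    have u1 : T.dist x y ≤ T.dist x c' + T.dist c' y := hT.isConnected.dist_triangle
    have u2 : T.dist c' y ≤ T.dist c' c'' + T.dist c'' y := hT.isConnected.dist_triangle
    omega
  · have t3 := serre_btw_trans hT hwc''z hwc'z (le_of_lt hC)
    have u1 : T.dist y x ≤ T.dist y c'' + T.dist c'' x := hT.isConnected.dist_triangle
    have u2 : T.dist c'' x ≤ T.dist c'' c' + T.dist c' x := hT.isConnected.dist_triangle
    have q11 := T.dist_comm (u := x) (v := y)
    have q12 := T.dist_comm (u := c'') (v := x)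
    have q13 := T.dist_comm (u := c') (v := c'')
    omega

/-- An adjacency-preserving permutation preserves graph distance. -/
lemma serre_auto_dist (hc : T.Connected) (a : Equiv.Perm V)
    (ha : ∀ x y : V, T.Adj x y ↔ T.Adj (a x) (a y)) (x y : V) :
    T.dist (a x) (a y) = T.dist x y := by
  have key : ∀ (e : Equiv.Perm V), (∀ u v : V, T.Adj u v ↔ T.Adj (e u) (e v)) →
      ∀ x y : V, T.dist (e x) (e y) ≤ T.dist x y := by
    intro e he x y
    obtain ⟨p, hp⟩ := hc.exists_walk_length_eq_dist x y
    have := dist_le (p.map ⟨(e : V → V), fun {u v} h => (he u v).mp h⟩)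
    rwa [Walk.length_map, hp] at this
  refine le_antisymm (key a ha x y) ?_
  have hsymm : ∀ u v : V, T.Adj u v ↔ T.Adj (a.symm u) (a.symm v) := by
    intro u v
    conv_lhs => rw [← a.apply_symm_apply u, ← a.apply_symm_apply v]
    exact (ha _ _).symm
  have := key a.symm hsymm (a x) (a y)
  simpa using this

/-- The elliptic midpoint lemma: if `a` has a fixed point, then for every `z` there is a
fixed point `q` at distance `k` from `z` with `dist z (a z) = 2 k`, and `q` is closest. -/
lemma serre_elliptic_mid (hT : T.IsTree) (a : Equiv.Perm V)
    (ha : ∀ x y : V, T.Adj x y ↔ T.Adj (a x) (a y)) (hfa : ∃ x, a x = x) (z : V) :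
    ∃ k q, a q = q ∧ T.dist z q = k ∧ T.dist z (a z) = 2 * k ∧
      ∀ q', a q' = q' → k ≤ T.dist z q' := by
  have hc := hT.isConnected
  have had := serre_auto_dist hc a ha
  set K : Set ℕ := {n | ∃ q, a q = q ∧ T.dist z q = n} with hK
  have hKne : K.Nonempty := by obtain ⟨x0, hx0⟩ := hfa; exact ⟨_, x0, hx0, rfl⟩
  obtain ⟨q, hq, hzq⟩ := Nat.sInf_mem hKne
  set k := sInf K with hk
  have hmin : ∀ q', a q' = q' → k ≤ T.dist z q' := fun q' h => Nat.sInf_le ⟨q', h, rfl⟩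
  refine ⟨k, q, hq, hzq, ?_, hmin⟩
  rcases Nat.eq_zero_or_pos k with hk0 | hkpos
  · have : z = q := (hc.dist_eq_zero_iff).mp (by omega)
    subst this
    rw [hq] at *
    simp [hc.dist_eq_zero_iff.mpr rfl] at hzq ⊢
    omega
  -- upper bound
  have hqaz : T.dist q (a z) = k := by
    conv_lhs => rw [← hq]
    rw [had, T.dist_comm]; exact hzq
  have hub : T.dist z (a z) ≤ 2 * k := by
    have := hc.dist_triangle (u := z) (v := q) (w := a z)
    omega
  rcases le_or_gt (2 * k) (T.dist z (a z)) with hge | hlt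
  · omega
  exfalso
  obtain ⟨c, hc1, hc2, hc3⟩ := serre_median hT z (a z) q
  have hcq : 0 < T.dist c q := by
    have e1 := T.dist_comm (u := a z) (v := q)
    have e2 := T.dist_comm (u := a z) (v := c)
    have e3 := T.dist_comm (u := z) (v := q)
    omega
  have hqc : T.dist q c = T.dist c q := T.dist_comm
  have hqz : T.dist q z = k := by rw [T.dist_comm]; exact hzq
  have hqnez : q ≠ z := by
    intro h; subst h; simp [hc.dist_eq_zero_iff.mpr rfl] at hzq; omega
  have hqneaz : q ≠ a z := by
    intro h; rw [← h] at hqaz; simp [hc.dist_eq_zero_iff.mpr rfl] at hqaz; omega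
  have hqnec : q ≠ c := by
    intro h; subst h; simp [hc.dist_eq_zero_iff.mpr rfl] at hcq
  -- u' : neighbour of q toward c
  obtain ⟨u', hu'1, hu'2⟩ := serre_toward_exists hT hqnec
  -- c is between q and z, and between q and a z
  have hbqcz : T.dist q c + T.dist c z = T.dist q z := by
    have := T.dist_comm (u := z) (v := c); omega
  have hbqcaz : T.dist q c + T.dist c (a z) = T.dist q (a z) := by
    have e1 := T.dist_comm (u := a z) (v := c)
    have e2 := T.dist_comm (u := a z) (v := q)
    omega
  have hu'z := serre_toward_refine hT hu'1 hu'2 hbqcz (by intro h; exact hqnec h.symm)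
  have hu'az := serre_toward_refine hT hu'1 hu'2 hbqcaz (by intro h; exact hqnec h.symm)
  -- a u' is also the neighbour of q toward a z
  have hau1 : T.dist q (a u') = 1 := by conv_lhs => rw [← hq]; rw [had]; exact hu'1
  have hau2 : T.dist (a u') (a z) = T.dist u' z := had u' z
  have hu'zval : T.dist u' z = k - 1 := by omega
  have hau2' : T.dist q (a u') + T.dist (a u') (a z) = T.dist q (a z) := by
    rw [hau1, hau2, hqaz, hu'zval]; omega
  have : u' = a u' := serre_toward_unique hT hu'1 hu'az hau1 hau2'
  -- u' is a fixed point closer to z than q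
  have hfix : a u' = u' := this.symm
  have := hmin u' hfix
  have : T.dist z u' = k - 1 := by rw [T.dist_comm]; omega
  omega

end SerreAux

/-- Serre: if `a, b` are elliptic automorphisms of a tree with disjoint fixed
point sets, then `ab` is hyperbolic with translation length `2·d(Fix a, Fix b) > 0`. -/
theorem elliptic_product_hyperbolic (V : Type*) (T : SimpleGraph V) (hT : T.IsTree)
    (a b : Equiv.Perm V)
    (ha : ∀ x y : V, T.Adj x y ↔ T.Adj (a x) (a y))
    (hb : ∀ x y : V, T.Adj x y ↔ T.Adj (b x) (b y))
    (hfa : ∃ x, a x = x) (hfb : ∃ x, b x = x)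
    (hdisj : {x : V | a x = x} ∩ {x : V | b x = x} = ∅) :
    let d : ℕ := sInf {n : ℕ | ∃ x y : V, a x = x ∧ b y = y ∧ T.dist x y = n}
    let ℓ : ℕ := sInf (Set.range fun x : V => T.dist x (a (b x)))
    0 < ℓ ∧ ℓ = 2 * d := by
  classical
  intro d ℓ
  have hc := hT.isConnected
  have hd : d = sInf {n : ℕ | ∃ x y : V, a x = x ∧ b y = y ∧ T.dist x y = n} := rfl
  have hℓ : ℓ = sInf (Set.range fun x : V => T.dist x (a (b x))) := rfl
  set S : Set ℕ := {n : ℕ | ∃ x y : V, a x = x ∧ b y = y ∧ T.dist x y = n} with hSdef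
  obtain ⟨x0, hx0⟩ := hfa
  obtain ⟨y0, hy0⟩ := hfb
  have hSne : S.Nonempty := ⟨_, x0, y0, hx0, hy0, rfl⟩
  obtain ⟨x, y, hax, hby, hxy⟩ := Nat.sInf_mem hSne
  have hlbS : ∀ n ∈ S, sInf S ≤ n := fun n hn => Nat.sInf_le hn
  have hdpos : 0 < sInf S := by
    rcases Nat.eq_zero_or_pos (sInf S) with h0 | h
    · exfalso
      have hxy0 : x = y := hc.dist_eq_zero_iff.mp (by omega)
      subst hxy0
      have hmem : x ∈ {x : V | a x = x} ∩ {x : V | b x = x} := ⟨hax, hby⟩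
      rw [hdisj] at hmem
      exact hmem
    · exact h
  -- lower bound: every displacement of a∘b is at least 2 sInf S
  have lower : ∀ z : V, 2 * sInf S ≤ T.dist z (a (b z)) := by
    intro z
    obtain ⟨β, m, hbm, hzm, hzw, -⟩ := serre_elliptic_mid hT b hb ⟨y0, hy0⟩ z
    obtain ⟨α, m', ham', hwm', hwaw, -⟩ := serre_elliptic_mid hT a ha ⟨x0, hx0⟩ (b z)
    set w := b z with hw
    have hD : sInf S ≤ T.dist m' m := hlbS _ ⟨m', m, ham', hbm, rfl⟩
    have hmw : T.dist m w = β := by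
      have h1 := serre_auto_dist hc b hb m z
      rw [hbm] at h1
      rw [← hw] at h1
      rw [h1, T.dist_comm]
      exact hzm
    have hm'aw : T.dist m' (a w) = α := by
      have h1 := serre_auto_dist hc a ha m' w
      rw [ham'] at h1
      rw [h1, T.dist_comm]
      exact hwm'
    have fp1 := serre_fourpoint hT w m m' z
    have fp2 := serre_fourpoint hT w z m' (a w)
    have tA : T.dist w (a w) ≤ T.dist w z + T.dist z (a w) := hc.dist_triangle
    have tB : T.dist w z ≤ T.dist w (a w) + T.dist (a w) z := hc.dist_triangle
    have tC : T.dist z (a w) ≤ T.dist z w + T.dist w (a w) := hc.dist_triangle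
    have q1 := T.dist_comm (u := z) (v := w)
    have q2 := T.dist_comm (u := z) (v := m)
    have q3 := T.dist_comm (u := m) (v := w)
    have q4 := T.dist_comm (u := w) (v := m')
    have q5 := T.dist_comm (u := z) (v := m')
    have q6 := T.dist_comm (u := z) (v := a w)
    have q7 := T.dist_comm (u := w) (v := a w)
    have q8 := T.dist_comm (u := m) (v := m')
    rw [le_max_iff] at fp1 fp2
    rcases fp1 with h1 | h1 <;> [skip; rcases fp2 with h2 | h2] <;> omega
  -- upper bound: the displacement of y is exactly 2 sInf S
  obtain ⟨k, q, haq, hyq, hyay, hkmin⟩ := serre_elliptic_mid hT a ha ⟨x0, hx0⟩ y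
  have hk1 : k ≤ sInf S := by
    have := hkmin x hax
    have hcomm := T.dist_comm (u := y) (v := x)
    omega
  have hk2 : sInf S ≤ k := by
    refine hlbS _ ⟨q, y, haq, hby, ?_⟩
    rw [T.dist_comm]
    exact hyq
  have helem : T.dist y (a (b y)) = 2 * sInf S := by
    rw [hby, hyay]
    omega
  have hub : ℓ ≤ 2 * sInf S := by
    rw [hℓ]
    exact Nat.sInf_le ⟨y, helem⟩
  have hmemℓ : ℓ ∈ Set.range fun x : V => T.dist x (a (b x)) := by
    rw [hℓ]
    exact Nat.sInf_mem ⟨_, Set.mem_range_self y⟩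
  obtain ⟨z0, hz0⟩ := hmemℓ
  have hlbℓ : 2 * sInf S ≤ ℓ := by
    rw [← hz0]
    exact lower z0
  constructor
  · omega
  · rw [hd]
    omega
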